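/- arXiv:2211.08525 — 2 statements merged into one kernel-verified Lean document; each statement's English description precedes it below -/
import Mathlib

section
/- Let H be a real inner product space, let d ≥ 1, let γ > 0, and let φ : EuclideanSpace ℝ (Fin d) → H be a feature map satisfying ⟪φ x, φ y⟫ = exp(-(γ/2) * ‖x - y‖²) for all x, y. Then for any training points x₁, …, x_N and any point x, the density-matrix quadratic form equals Gaussian kernel density estimation: ⟪φ x, (1/N) • ∑_{i=1}^N ⟪φ x_i, φ x⟫ • φ x_i⟫ = (1/N) * ∑_{i=1}^N exp(-γ * ‖x - x_i‖²). -/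
open RealInnerProductSpace

/-- The density-matrix quadratic form reproduces Gaussian kernel density estimation
when the feature map exactly realizes the kernel `k_{γ/2}`. -/
theorem dmkde_eq_kde {H : Type*} [NormedAddCommGroup H] [InnerProductSpace ℝ H]
    (d : ℕ) (hd : 1 ≤ d) (γ : ℝ) (hγ : 0 < γ)
    (φ : EuclideanSpace ℝ (Fin d) → H)
    (hφ : ∀ x y : EuclideanSpace ℝ (Fin d),
      ⟪φ x, φ y⟫ = Real.exp (-(γ / 2) * ‖x - y‖ ^ 2))
    (N : ℕ) (xs : Fin N → EuclideanSpace ℝ (Fin d)) (x : EuclideanSpace ℝ (Fin d)) :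
    ⟪φ x, (1 / (N : ℝ)) • ∑ i, ⟪φ (xs i), φ x⟫ • φ (xs i)⟫
      = (1 / (N : ℝ)) * ∑ i, Real.exp (-γ * ‖x - xs i‖ ^ 2) := by
  rw [inner_smul_right, inner_sum]
  congr 1
  refine Finset.sum_congr rfl fun i _ => ?_
  rw [inner_smul_right, hφ, hφ, ← Real.exp_add, norm_sub_rev (xs i) x]
  ring_nf
end

section
/- Let d ≥ 1 and γ > 0. Let μ be the product measure on ((Fin d) → ℝ) × ℝ given by: the first factor is the product of d independent Gaussian measures on ℝ with mean 0 and variance 2γ, and the second factor is the uniform probability measure on the interval [0, 2π]. Then for all x, y ∈ EuclideanSpace ℝ (Fin d), ∫ 2 · cos(∑_i w_i x_i + b) · cos(∑_i w_i y_i + b) dμ(w, b) = exp(-γ ‖x - y‖²). -/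
/-!
Averaging over the phase `b` kills the `cos (wᵀ(x + y) + 2b)` term of the product-to-sum
formula and leaves `cos (wᵀ(x - y))`. Its expectation under the Gaussian `w` is the real part of
the characteristic function of `N(0, v I)` at `x - y`, which is `exp (-v ‖x - y‖² / 2)`; here
`v = 2γ`.
-/

open MeasureTheory ProbabilityTheory BoundedContinuousFunction Real WithLp
open scoped NNReal ENNReal

lemma re_charFun_eq_integral_cos {E : Type*} [NormedAddCommGroup E] [InnerProductSpace ℝ E]
    [MeasurableSpace E] [OpensMeasurableSpace E] (μ : Measure E) [IsFiniteMeasure μ] (t : E) :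
    (charFun μ t).re = ∫ x, cos (inner ℝ x t) ∂μ := by
  rw [charFun_eq_integral_innerProbChar, ← RCLike.re_eq_complex_re,
    ← integral_re ((innerProbChar t).integrable μ)]
  simp [innerProbChar_apply, Complex.exp_ofReal_mul_I_re]

lemma charFun_map_toLp_pi_gaussianReal {ι : Type*} [Fintype ι] (v : ℝ≥0)
    (t : EuclideanSpace ℝ ι) :
    charFun ((Measure.pi fun _ : ι => gaussianReal 0 v).map (toLp 2)) t
      = Real.exp (-(v * ‖t‖ ^ 2 / 2)) := by
  simp_rw [charFun_pi, charFun_gaussianReal, ← Complex.exp_sum, EuclideanSpace.real_norm_sq_eq]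
  push_cast
  simp [Finset.mul_sum, Finset.sum_div]

lemma integral_cos_sum_mul_pi_gaussianReal {ι : Type*} [Fintype ι] (v : ℝ≥0)
    (t : EuclideanSpace ℝ ι) :
    ∫ w, cos (∑ i, w i * t i) ∂(Measure.pi fun _ : ι => gaussianReal 0 v)
      = Real.exp (-(v * ‖t‖ ^ 2 / 2)) := by
  have hinner (w : ι → ℝ) : ∑ i, w i * t i = inner ℝ (toLp 2 w) t := by
    simp [PiLp.inner_apply, mul_comm]
  simp_rw [hinner]
  rw [← MeasurableEquiv.coe_toLp, ← integral_map_equiv (MeasurableEquiv.toLp 2 (ι → ℝ))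
    (fun u => cos (inner ℝ u t)), MeasurableEquiv.coe_toLp, ← re_charFun_eq_integral_cos,
    charFun_map_toLp_pi_gaussianReal, Complex.ofReal_re]

lemma isProbabilityMeasure_uniform_Icc_zero {T : ℝ} (hT : 0 < T) :
    IsProbabilityMeasure ((ENNReal.ofReal T)⁻¹ • volume.restrict (Set.Icc 0 T)) := by
  constructor
  rw [Measure.smul_apply, Measure.restrict_apply_univ, Real.volume_Icc, sub_zero, smul_eq_mul,
    ENNReal.inv_mul_cancel (by simpa using hT) ENNReal.ofReal_ne_top]

lemma intervalIntegral_cos_two_mul_add_eq_zero (c : ℝ) :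
    ∫ b in (0 : ℝ)..2 * π, cos (2 * b + c) = 0 := by
  rw [intervalIntegral.integral_comp_mul_add cos two_ne_zero, integral_cos,
    show 2 * (2 * π) + c = c + 2 * π + 2 * π by ring, sin_add_two_pi, sin_add_two_pi]
  simp

lemma integral_two_mul_cos_add_mul_cos_add_uniform (A C : ℝ) :
    ∫ b, 2 * cos (A + b) * cos (C + b)
        ∂((ENNReal.ofReal (2 * π))⁻¹ • volume.restrict (Set.Icc 0 (2 * π)))
      = cos (A - C) := by
  have h2π : 0 < 2 * π := by positivity
  simp_rw [two_mul_cos_mul_cos, show ∀ b, A + b - (C + b) = A - C from fun b => by ring,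
    show ∀ b, A + b + (C + b) = 2 * b + (A + C) from fun b => by ring]
  rw [integral_smul_measure, integral_Icc_eq_integral_Ioc,
    ← intervalIntegral.integral_of_le h2π.le,
    intervalIntegral.integral_add intervalIntegrable_const
      (by apply Continuous.intervalIntegrable; fun_prop),
    intervalIntegral_cos_two_mul_add_eq_zero, intervalIntegral.integral_const, ENNReal.toReal_inv,
    ENNReal.toReal_ofReal h2π.le, smul_eq_mul, smul_eq_mul]
  field_simp
  ring

theorem rff_unbiased_gaussian_kernel_general {d : ℕ} (γ : NNReal)
    (μ : Measure (((Fin d) → ℝ) × ℝ))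
    (hμ : μ = (Measure.pi fun _ : Fin d => gaussianReal 0 (2 * γ)).prod
      ((ENNReal.ofReal (2 * Real.pi))⁻¹ • volume.restrict (Set.Icc (0 : ℝ) (2 * Real.pi))))
    (x y : EuclideanSpace ℝ (Fin d)) :
    ∫ p, 2 * Real.cos (∑ i, p.1 i * x i + p.2) * Real.cos (∑ i, p.1 i * y i + p.2) ∂μ
      = Real.exp (-(γ : ℝ) * ‖x - y‖ ^ 2) := by
  subst hμ
  have := isProbabilityMeasure_uniform_Icc_zero (T := 2 * π) (by positivity)
  have hintegrable : Integrable (fun p : (Fin d → ℝ) × ℝ =>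
      2 * cos (∑ i, p.1 i * x i + p.2) * cos (∑ i, p.1 i * y i + p.2))
      ((Measure.pi fun _ : Fin d => gaussianReal 0 (2 * γ)).prod
        ((ENNReal.ofReal (2 * π))⁻¹ • volume.restrict (Set.Icc 0 (2 * π)))) := by
    refine .of_bound (by fun_prop) 2 (ae_of_all _ fun p => ?_)
    rw [norm_mul, norm_mul, norm_two]
    calc 2 * ‖cos _‖ * ‖cos _‖ ≤ 2 * 1 * 1 := by gcongr <;> exact abs_cos_le_one _
      _ = 2 := by norm_num
  rw [integral_prod _ hintegrable]
  simp_rw [integral_two_mul_cos_add_mul_cos_add_uniform, ← Finset.sum_sub_distrib, ← mul_sub,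
    ← PiLp.sub_apply, integral_cos_sum_mul_pi_gaussianReal]
  push_cast
  ring_nf

/-- Unbiasedness of the random Fourier feature approximation of the Gaussian kernel:
for `w` with independent `N(0, 2γ)` coordinates and `b` uniform on `[0, 2π]`, the
expectation of `2 cos(wᵀx + b) cos(wᵀy + b)` equals `exp (-γ ‖x - y‖²)`. -/
theorem rff_unbiased_gaussian_kernel {d : ℕ} (hd : 1 ≤ d) (γ : NNReal) (hγ : 0 < γ)
    (μ : Measure (((Fin d) → ℝ) × ℝ))
    (hμ : μ = (Measure.pi fun _ : Fin d => gaussianReal 0 (2 * γ)).prod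
      ((ENNReal.ofReal (2 * Real.pi))⁻¹ • volume.restrict (Set.Icc (0 : ℝ) (2 * Real.pi))))
    (x y : EuclideanSpace ℝ (Fin d)) :
    ∫ p, 2 * Real.cos (∑ i, p.1 i * x i + p.2) * Real.cos (∑ i, p.1 i * y i + p.2) ∂μ
      = Real.exp (-(γ : ℝ) * ‖x - y‖ ^ 2) :=
  rff_unbiased_gaussian_kernel_general γ μ hμ x y
end
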